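/- Every element of Sym(Ω) for Ω infinite is the product of two elements in the same conjugacy class (the class of replete permutations); equivalently, the square of the conjugacy class of replete permutations is all of Sym(Ω). -/

import Mathlib

/-- The orbit of `x` under the permutation `f`. -/
def permOrbit {Ω : Type*} (f : Equiv.Perm Ω) (x : Ω) : Set Ω :=
  {y : Ω | ∃ n : ℤ, (f ^ n) x = y}

/-- A permutation of an infinite set `Ω` is replete if for every positive
cardinality `c ≤ ℵ₀` it has `|Ω|` orbits of cardinality `c`. -/
def Replete {Ω : Type*} (f : Equiv.Perm Ω) : Prop :=
  ∀ c : Cardinal, 0 < c → c ≤ Cardinal.aleph0 →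
    Cardinal.mk {s : Set Ω // (∃ x : Ω, s = permOrbit f x) ∧ Cardinal.mk ↥s = c} =
      Cardinal.mk Ω

/-!
Two permutations are conjugate as soon as some bijection between their cycles preserves lengths:
on a single cycle, `f ^ k x ↦ g ^ k y` is well defined because cycles of equal length have equal
stabilisers in `ℤ`. So all replete permutations are conjugate. Moreover a permutation is replete
as soon as it contains a copy of a replete one on a subset of full size.

Fix a replete `ρ`. Among three disjoint subsets of full size one finds `Y` such that
`Y ∪ f⁻¹(Y)` misses a set of full size, which contains two disjoint copies `X`, `Z` of `Ω`.
Let `e` act as `ρ⁻¹` on `X` and as `f⁻¹ ∘ ρ` from `Y` into `f⁻¹(Y)`; `Z` leaves complements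
of equal size, so `e` extends to a permutation. Then `b = e⁻¹` contains `ρ` on `X`,
`a = f e` contains `ρ` on `Y`, and `f = a b`.
-/

open Equiv Function Cardinal

universe u v

lemma Function.Semiconj.perm_zpow {α β : Type*} {J : α → β} {σ : Perm α} {f : Perm β}
    (h : Semiconj J σ f) (n : ℤ) : Semiconj J ⇑(σ ^ n) ⇑(f ^ n) := by
  induction n using Int.induction_on with
  | zero => exact Semiconj.id_right
  | succ k ih => simpa only [zpow_add_one, Perm.coe_mul] using ih.comp_right h
  | pred k ih =>
    simpa only [zpow_sub_one, Perm.coe_mul] using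
      ih.comp_right (h.inverses_right σ.right_inv f.left_inv : Semiconj J ⇑σ⁻¹ ⇑f⁻¹)

namespace Equiv.Perm

variable {α : Type v} {Ω : Type u}

lemma permOrbit_eq_orbit_zpowers (f : Perm Ω) (x : Ω) :
    permOrbit f x = MulAction.orbit (Subgroup.zpowers f) x := by
  ext y
  simp only [permOrbit, MulAction.mem_orbit_iff, Subgroup.exists_zpowers]
  exact Iff.rfl

lemma natCard_permOrbit (f : Perm Ω) (x : Ω) :
    Nat.card (permOrbit f x) = minimalPeriod f x := by
  rw [permOrbit_eq_orbit_zpowers, Nat.card_congr (MulAction.orbitZPowersEquiv f x),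
    Nat.card_zmod]
  rfl

lemma zpow_apply_eq_zpow_apply_iff (f : Perm Ω) (x : Ω) (k m : ℤ) :
    (f ^ k) x = (f ^ m) x ↔ (Nat.card (permOrbit f x) : ℤ) ∣ k - m := by
  rw [natCard_permOrbit, ← (f ^ (-m)).injective.eq_iff, ← Perm.mul_apply, ← Perm.mul_apply,
    ← zpow_add, ← zpow_add, neg_add_cancel, zpow_zero, Perm.one_apply, neg_add_eq_sub]
  exact MulAction.zpow_smul_eq_iff_minimalPeriod_dvd (a := f) (b := x)

lemma mk_permOrbit_pos (f : Perm Ω) (x : Ω) : 0 < #(permOrbit f x) :=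
  pos_iff_ne_zero.2 (mk_ne_zero_iff.2 ⟨x, SameCycle.refl f x⟩)

lemma mk_permOrbit_le_aleph0 (f : Perm Ω) (x : Ω) : #(permOrbit f x) ≤ ℵ₀ :=
  (Set.countable_range fun n : ℤ => (f ^ n) x).le_aleph0

lemma mk_orbits_of_mk_eq_le (f : Perm Ω) (c : Cardinal) :
    #{s : Set Ω // (∃ x, s = permOrbit f x) ∧ #s = c} ≤ #Ω :=
  (mk_subtype_mono fun _ ⟨⟨x, hx⟩, _⟩ => ⟨x, hx.symm⟩).trans mk_range_le

lemma permOrbit_eq_image_of_semiconj {J : α → Ω} {σ : Perm α} {f : Perm Ω} (h : Semiconj J σ f)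
    (a : α) : permOrbit f (J a) = J '' permOrbit σ a := by
  ext y
  simp only [permOrbit, Set.mem_ofPred_eq, Set.mem_image, ← (h.perm_zpow _).eq]
  constructor
  · rintro ⟨n, rfl⟩; exact ⟨_, ⟨n, rfl⟩, rfl⟩
  · rintro ⟨_, ⟨n, rfl⟩, rfl⟩; exact ⟨n, rfl⟩

end Equiv.Perm

namespace Replete

variable {α Ω : Type u}

lemma of_semiconj {σ : Perm α} {f : Perm Ω} (hσ : Replete σ) {J : α → Ω} (hJ : Injective J)
    (h : Semiconj J σ f) (hα : #α = #Ω) : Replete f := by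
  intro c hc hc'
  refine le_antisymm (Perm.mk_orbits_of_mk_eq_le f c) ?_
  rw [← hα, ← hσ c hc hc']
  refine mk_le_of_injective (f := fun s => ⟨J '' s.1, ?_, ?_⟩) ?_
  · obtain ⟨a, ha⟩ := s.2.1
    exact ⟨J a, by rw [ha, Perm.permOrbit_eq_image_of_semiconj h]⟩
  · rw [mk_image_eq hJ, s.2.2]
  · intro s t hst
    exact Subtype.ext (Set.image_injective.2 hJ (congrArg Subtype.val hst))

end Replete

/-- Its orbits have size `n` for `n ≥ 1`, and size `ℵ₀` for `n = 0` since `ZMod 0 = ℤ`. -/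
def shiftModel (X : Type u) : Perm (X × Σ n : ℕ, ZMod n) :=
  prodCongr (Equiv.refl X) (sigmaCongrRight fun _ => Equiv.addRight 1)

lemma exists_lift_mk_zmod {c : Cardinal.{u}} (hc : 0 < c) (hc' : c ≤ ℵ₀) :
    ∃ n : ℕ, lift.{u} #(ZMod n) = c := by
  rcases hc'.lt_or_eq with hlt | rfl
  · obtain ⟨n, rfl⟩ := lt_aleph0.1 hlt
    have : NeZero n := ⟨by rintro rfl; simp at hc⟩
    exact ⟨n, by simp⟩
  · exact ⟨0, by simp [ZMod]⟩

lemma permOrbit_addRight_one (n : ℕ) : permOrbit (Equiv.addRight (1 : ZMod n)) 0 = Set.univ :=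
  Set.eq_univ_of_forall fun k => ⟨k.cast, by simp⟩

instance ZMod.instCountable (n : ℕ) : Countable (ZMod n) := by
  cases n
  exacts [inferInstanceAs (Countable ℤ), inferInstance]

lemma mk_prod_sigma_zmod (X : Type u) [Infinite X] : #(X × Σ n : ℕ, ZMod n) = #X := by
  rw [mk_prod, lift_uzero]
  exact Cardinal.mul_eq_left (aleph0_le_mk X)
    ((lift_le_aleph0.2 mk_le_aleph0).trans (aleph0_le_mk X)) (by simp [aleph0_ne_zero])

lemma replete_shiftModel (X : Type u) [Infinite X] : Replete (shiftModel X) := by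
  intro c hc hc'
  refine le_antisymm (Perm.mk_orbits_of_mk_eq_le _ c) ?_
  obtain ⟨n, hn⟩ := exists_lift_mk_zmod hc hc'
  set J : X → ZMod n → X × Σ n : ℕ, ZMod n := fun x k => (x, ⟨n, k⟩)
  have hJ (x : X) : Injective (J x) := fun k l hkl => by simpa [J] using hkl
  have horbit (x : X) : permOrbit (shiftModel X) (J x 0) = Set.range (J x) := by
    rw [Perm.permOrbit_eq_image_of_semiconj (J := J x) (σ := Equiv.addRight 1) (fun _ => rfl),
      permOrbit_addRight_one, Set.image_univ]
  have hmk (x : X) : #(Set.range (J x)) = c := by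
    rw [← hn, ← mk_range_eq_of_injective (hJ x), lift_uzero]
  rw [mk_prod_sigma_zmod]
  refine mk_le_of_injective (f := fun x => ⟨_, ⟨J x 0, rfl⟩, (horbit x).symm ▸ hmk x⟩) ?_
  intro x y hxy
  have hx : J x 0 ∈ permOrbit (shiftModel X) (J y 0) := by
    rw [show permOrbit _ (J y 0) = permOrbit _ (J x 0) from congrArg Subtype.val hxy.symm]
    exact Perm.SameCycle.refl _ _
  rw [horbit] at hx
  obtain ⟨k, hk⟩ := hx
  exact (congrArg Prod.fst hk).symm

lemma exists_replete (Ω : Type u) [Infinite Ω] : ∃ ρ : Perm Ω, Replete ρ := by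
  obtain ⟨e⟩ := Cardinal.eq.1 (mk_prod_sigma_zmod Ω)
  exact ⟨e.permCongr (shiftModel Ω),
    (replete_shiftModel Ω).of_semiconj e.injective (fun _ => by simp) (mk_prod_sigma_zmod Ω)⟩

namespace Equiv.Perm

variable {Ω : Type u} {f g : Perm Ω}

def Cycles (f : Perm Ω) : Type u := {s : Set Ω // ∃ x, s = permOrbit f x}

noncomputable def Cycles.rep (s : Cycles f) : Ω := s.2.choose

lemma Cycles.eq_permOrbit_rep (s : Cycles f) : s.1 = permOrbit f s.rep := s.2.choose_spec

def cycleThrough (f : Perm Ω) (x : Ω) : Cycles f := ⟨permOrbit f x, x, rfl⟩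

lemma sameCycle_rep_cycleThrough (x : Ω) : f.SameCycle (cycleThrough f x).rep x := by
  have hx : x ∈ permOrbit f x := SameCycle.refl f x
  rwa [show permOrbit f x = _ from (cycleThrough f x).eq_permOrbit_rep] at hx

lemma cycleThrough_zpow_rep (s : Cycles f) (n : ℤ) : cycleThrough f ((f ^ n) s.rep) = s := by
  refine Subtype.ext ?_
  rw [s.eq_permOrbit_rep]
  ext y
  exact sameCycle_zpow_left

noncomputable def Cycles.transport (ψ : Cycles f ≃ Cycles g) (x : Ω) : Ω :=
  (g ^ (sameCycle_rep_cycleThrough (f := f) x).choose) (ψ (cycleThrough f x)).rep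

section Transport

variable (ψ : Cycles f ≃ Cycles g) (hψ : ∀ s, #(ψ s).1 = #s.1)
include hψ

lemma Cycles.zpow_rep_eq_iff (s : Cycles f) (k m : ℤ) :
    (f ^ k) s.rep = (f ^ m) s.rep ↔ (g ^ k) (ψ s).rep = (g ^ m) (ψ s).rep := by
  rw [zpow_apply_eq_zpow_apply_iff, zpow_apply_eq_zpow_apply_iff, ← (ψ s).eq_permOrbit_rep,
    ← s.eq_permOrbit_rep, Nat.card, Nat.card, hψ]

lemma Cycles.transport_zpow_rep (s : Cycles f) (n : ℤ) :
    transport ψ ((f ^ n) s.rep) = (g ^ n) (ψ s).rep := by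
  have hk := (sameCycle_rep_cycleThrough (f := f) ((f ^ n) s.rep)).choose_spec
  unfold transport
  generalize (sameCycle_rep_cycleThrough (f := f) ((f ^ n) s.rep)).choose = k at hk ⊢
  rw [cycleThrough_zpow_rep] at hk ⊢
  exact (zpow_rep_eq_iff ψ hψ s k n).1 hk

lemma Cycles.transport_apply (x : Ω) : transport ψ (f x) = g (transport ψ x) := by
  obtain ⟨k, hk⟩ := sameCycle_rep_cycleThrough (f := f) x
  rw [← hk, ← Perm.mul_apply, ← zpow_one_add, transport_zpow_rep ψ hψ, transport_zpow_rep ψ hψ,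
    zpow_one_add, Perm.mul_apply]

lemma Cycles.mk_symm_apply (t : Cycles g) : #(ψ.symm t).1 = #t.1 := by
  rw [← hψ, apply_symm_apply]

lemma Cycles.transport_symm_transport (x : Ω) : transport ψ.symm (transport ψ x) = x := by
  obtain ⟨k, hk⟩ := sameCycle_rep_cycleThrough (f := f) x
  rw [← hk, transport_zpow_rep ψ hψ, transport_zpow_rep ψ.symm (mk_symm_apply ψ hψ),
    symm_apply_apply]

theorem isConj_of_cycles_equiv : IsConj f g := by
  have hψ' := Cycles.mk_symm_apply ψ hψ
  let T : Perm Ω :=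
    ⟨Cycles.transport ψ, Cycles.transport ψ.symm, Cycles.transport_symm_transport ψ hψ,
      fun y => by simpa using Cycles.transport_symm_transport ψ.symm hψ' y⟩
  refine isConj_iff.2 ⟨T, ext fun x => ?_⟩
  rw [Perm.mul_apply, Perm.mul_apply]
  exact (Cycles.transport_apply ψ hψ _).trans (congrArg g (T.apply_symm_apply x))

end Transport

lemma Cycles.mk_subtype_mk_eq (f : Perm Ω) (c : Cardinal) :
    #{s : Cycles f // #s.1 = c} = #{s : Set Ω // (∃ x, s = permOrbit f x) ∧ #s = c} :=
  mk_congr (subtypeSubtypeEquivSubtypeInter (fun s : Set Ω => ∃ x, s = permOrbit f x) (#· = c))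

end Equiv.Perm

namespace Replete

variable {Ω : Type u} {f g : Perm Ω}

lemma mk_cycles_eq (hf : Replete f) (hg : Replete g) (c : Cardinal) :
    #{s : Perm.Cycles f // #s.1 = c} = #{s : Perm.Cycles g // #s.1 = c} := by
  rw [Perm.Cycles.mk_subtype_mk_eq, Perm.Cycles.mk_subtype_mk_eq]
  by_cases hc : 0 < c ∧ c ≤ ℵ₀
  · rw [hf c hc.1 hc.2, hg c hc.1 hc.2]
  · have (h : Perm Ω) : IsEmpty {s : Set Ω // (∃ x, s = permOrbit h x) ∧ #s = c} := by
      refine ⟨fun ⟨s, ⟨x, hs⟩, hsc⟩ => hc ?_⟩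
      subst hs hsc
      exact ⟨Perm.mk_permOrbit_pos h x, Perm.mk_permOrbit_le_aleph0 h x⟩
    simp only [mk_eq_zero]

theorem isConj (hf : Replete f) (hg : Replete g) : IsConj f g := by
  have e c := (Cardinal.eq.1 (mk_cycles_eq hf hg c)).some
  exact Perm.isConj_of_cycles_equiv (ofFiberEquiv e) (ofFiberEquiv_map e)

end Replete

section Decomposition

variable {Ω : Type u}

lemma mk_eq_of_subset {s t : Set Ω} (hst : s ⊆ t) (hs : #s = #Ω) : #t = #Ω :=
  le_antisymm (mk_set_le t) (hs ▸ mk_le_mk_of_subset hst)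

lemma mk_eq_or_mk_eq_of_union [Infinite Ω] {s t : Set Ω} (h : #↥(s ∪ t) = #Ω) :
    #s = #Ω ∨ #t = #Ω := by
  by_contra! H
  exact ((mk_union_le s t).trans_lt (add_lt_of_lt (aleph0_le_mk Ω)
    ((mk_set_le s).lt_of_ne H.1) ((mk_set_le t).lt_of_ne H.2))).ne h

theorem exists_mk_eq_mk_compl_union_preimage_eq [Infinite Ω] (f : Ω → Ω) :
    ∃ Y : Set Ω, #Y = #Ω ∧ #↥(Y ∪ f ⁻¹' Y)ᶜ = #Ω := by
  obtain ⟨e⟩ := Cardinal.eq.1 (show #(Ω × Fin 3) = #Ω by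
    rw [mk_prod, lift_uzero, mk_fin, lift_natCast]
    exact Cardinal.mul_eq_left (aleph0_le_mk Ω) (natCast_lt_aleph0.le.trans (aleph0_le_mk Ω))
      (by simp))
  let W (k : Fin 3) : Set Ω := Set.range fun x => e (x, k)
  have hW k : #(W k) = #Ω := mk_range_eq _ fun x y hxy => by simpa using e.injective hxy
  have hdisj {k l : Fin 3} (hkl : k ≠ l) {x : Ω} (hk : x ∈ W k) (hl : x ∈ W l) : False := by
    obtain ⟨a, rfl⟩ := hk
    obtain ⟨b, hb⟩ := hl
    exact hkl (congrArg Prod.snd (e.injective hb)).symm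
  rcases mk_eq_or_mk_eq_of_union ((Set.sdiff_union_inter (W 1) (f ⁻¹' W 0)).symm ▸ hW 1)
    with h | h
  · refine ⟨W 0, hW 0, mk_eq_of_subset ?_ h⟩
    rintro x ⟨hx1, hx0⟩ (hx | hx)
    exacts [hdisj (by decide) hx1 hx, hx0 hx]
  · refine ⟨W 2, hW 2, mk_eq_of_subset ?_ h⟩
    rintro x ⟨hx1, hx0⟩ (hx | hx)
    exacts [hdisj (by decide) hx1 hx, hdisj (by decide) hx0 hx]

theorem exists_perm_apply_eq {β : Type*} {p q : β → Ω} (hp : Injective p) (hq : Injective q)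
    (h : #↥(Set.range p)ᶜ = #↥(Set.range q)ᶜ) : ∃ e : Perm Ω, ∀ b, e (p b) = q b := by
  let F : Set.range p ↪ Ω := (Equiv.ofInjective p hp).symm.toEmbedding.trans ⟨q, hq⟩
  have hF : Set.range F = Set.range q := by
    ext; simp [F]
  obtain ⟨e, he⟩ := Cardinal.extend_function F (by rw [hF]; exact Cardinal.eq.1 h)
  exact ⟨e, fun b => by simpa [F] using he ⟨p b, b, rfl⟩⟩

theorem exists_injective_separated [Infinite Ω] (f : Ω → Ω) :
    ∃ i j z : Ω → Ω, Injective i ∧ Injective j ∧ Injective z ∧ (∀ x y, i x ≠ z y) ∧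
      ∀ x, i x ∉ Set.range j ∪ f ⁻¹' Set.range j ∧ z x ∉ Set.range j ∪ f ⁻¹' Set.range j := by
  obtain ⟨Y, hY, hC⟩ := exists_mk_eq_mk_compl_union_preimage_eq f
  obtain ⟨eY⟩ := Cardinal.eq.1 hY.symm
  obtain ⟨eC⟩ := Cardinal.eq.1 (show #(Ω ⊕ Ω) = #↥(Y ∪ f ⁻¹' Y)ᶜ by
    rw [hC, mk_sum, lift_id, add_eq_self (aleph0_le_mk Ω)])
  have hrange : Set.range (fun x => (eY x : Ω)) = Y :=
    (EquivLike.range_comp Subtype.val eY).trans Subtype.range_coe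
  refine ⟨fun x => eC (.inl x), fun x => eY x, fun x => eC (.inr x),
    Subtype.val_injective.comp (eC.injective.comp Sum.inl_injective),
    Subtype.val_injective.comp eY.injective,
    Subtype.val_injective.comp (eC.injective.comp Sum.inr_injective),
    fun x y h => Sum.inl_ne_inr (eC.injective (Subtype.ext h)), fun x => ?_⟩
  rw [hrange]
  exact ⟨(eC _).2, (eC _).2⟩

theorem exists_eq_mul_of_semiconj [Infinite Ω] (f ρ : Perm Ω) :
    ∃ a b : Perm Ω, f = a * b ∧ (∃ j, Injective j ∧ Semiconj j ρ a) ∧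
      (∃ i, Injective i ∧ Semiconj i ρ b) := by
  obtain ⟨i, j, z, hi, hj, hz, hiz, hsep⟩ := exists_injective_separated f
  let p : Ω ⊕ Ω → Ω := Sum.elim (i ∘ ρ) j
  let q : Ω ⊕ Ω → Ω := Sum.elim i (⇑f⁻¹ ∘ j ∘ ρ)
  have hp : Injective p := (hi.comp ρ.injective).sumElim hj
    fun x y h => (hsep (ρ x)).1 (.inl ⟨y, h.symm⟩)
  have hq : Injective q := hi.sumElim (f⁻¹.injective.comp (hj.comp ρ.injective))
    fun x y h => (hsep x).1 (.inr ⟨ρ y, by simp [h]⟩)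
  have hzp : Set.range z ⊆ (Set.range p)ᶜ := by
    rintro _ ⟨x, rfl⟩ ⟨y | y, h⟩
    exacts [hiz _ _ h, (hsep x).2 (.inl ⟨y, h⟩)]
  have hzq : Set.range z ⊆ (Set.range q)ᶜ := by
    rintro _ ⟨x, rfl⟩ ⟨y | y, h⟩
    exacts [hiz _ _ h, (hsep x).2 (.inr ⟨ρ y, by simp [← h, q]⟩)]
  have hmkz : #(Set.range z) = #Ω := mk_range_eq z hz
  obtain ⟨e, he⟩ := exists_perm_apply_eq hp hq
    ((mk_eq_of_subset hzp hmkz).trans (mk_eq_of_subset hzq hmkz).symm)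
  refine ⟨f * e, e⁻¹, by simp, ⟨j, hj, fun x => ?_⟩, ⟨i, hi, fun x => ?_⟩⟩
  · simpa [p, q] using congrArg f (he (.inr x)).symm
  · exact (e.symm_apply_eq.2 (he (.inl x)).symm).symm

end Decomposition

theorem stmt19 {Ω : Type*} [Infinite Ω] (f : Equiv.Perm Ω) :
    ∃ a b : Equiv.Perm Ω, Replete a ∧ Replete b ∧ IsConj a b ∧ f = a * b := by
  obtain ⟨ρ, hρ⟩ := exists_replete Ω
  obtain ⟨a, b, hab, ⟨j, hj, ha⟩, ⟨i, hi, hb⟩⟩ := exists_eq_mul_of_semiconj f ρ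
  have ha' : Replete a := hρ.of_semiconj hj ha rfl
  have hb' : Replete b := hρ.of_semiconj hi hb rfl
  exact ⟨a, b, ha', hb', ha'.isConj hb', hab⟩
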